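/- arXiv:2104.10819 — 2 statements merged into one kernel-verified Lean document; each statement's English description precedes it below -/
import Mathlib

section
/- Every directed cycle in a Best Friend Graph has length exactly two; that is, if v₁, …, v_k are distinct vertices with f(v_j) = v_{j+1} (indices mod k) and k ≥ 2, then k = 2. -/
/-!
Along an orbit of the nearest-neighbour map `f`, the step lengths `d x (f x)` can only decrease,
since `x` is a candidate neighbour of `f x`. On a cycle they are therefore all equal, so `x` is
as close to `f x` as `f (f x)` is, and the tie-breaking rule gives `f (f x) ≤ x`. At the least
point of the cycle this forces `f (f x) = x`.
-/

open Function Fin.NatCast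

section NearestNeighbour

variable {V : Type*} {d : V → V → ℝ} {f : V → V}

theorem dist_apply_apply_le (hd : ∀ i j, d i j = d j i) (hf : ∀ i, f i ≠ i)
    (hmin : ∀ i k, k ≠ i → d i (f i) ≤ d i k) (x : V) :
    d (f x) (f (f x)) ≤ d x (f x) :=
  calc d (f x) (f (f x)) ≤ d (f x) x := hmin (f x) x (hf x).symm
    _ = d x (f x) := hd _ _

theorem dist_iterate_apply_le (hd : ∀ i j, d i j = d j i) (hf : ∀ i, f i ≠ i)
    (hmin : ∀ i k, k ≠ i → d i (f i) ≤ d i k) (x : V) (n : ℕ) :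
    d (f^[n] x) (f (f^[n] x)) ≤ d x (f x) :=
  antitone_nat_of_succ_le (f := fun n => d (f^[n] x) (f (f^[n] x)))
    (fun n => by
      simp only [iterate_succ_apply']
      exact dist_apply_apply_le hd hf hmin _) (Nat.zero_le n)

theorem dist_apply_apply_eq_of_mem_periodicPts (hd : ∀ i j, d i j = d j i) (hf : ∀ i, f i ≠ i)
    (hmin : ∀ i k, k ≠ i → d i (f i) ≤ d i k) {x : V} (hx : x ∈ periodicPts f) :
    d (f x) (f (f x)) = d x (f x) := by
  obtain ⟨n, hn, hxn⟩ := mem_periodicPts.mp hx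
  have hback : f^[n - 1] (f x) = x := by
    rw [← iterate_succ_apply, Nat.succ_eq_add_one, Nat.sub_add_cancel hn, hxn.eq]
  refine le_antisymm (dist_apply_apply_le hd hf hmin x) ?_
  simpa only [hback] using dist_iterate_apply_le hd hf hmin (f x) (n - 1)

variable [LinearOrder V]

theorem apply_apply_le_of_mem_periodicPts (hd : ∀ i j, d i j = d j i) (hf : ∀ i, f i ≠ i)
    (hmin : ∀ i k, k ≠ i → d i (f i) ≤ d i k)
    (htie : ∀ i k, k ≠ i → d i k = d i (f i) → f i ≤ k) {x : V} (hx : x ∈ periodicPts f) :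
    f (f x) ≤ x := by
  refine htie (f x) x (hf x).symm ?_
  rw [dist_apply_apply_eq_of_mem_periodicPts hd hf hmin hx, hd]

theorem apply_apply_eq_of_mem_periodicPts (hd : ∀ i j, d i j = d j i) (hf : ∀ i, f i ≠ i)
    (hmin : ∀ i k, k ≠ i → d i (f i) ≤ d i k)
    (htie : ∀ i k, k ≠ i → d i k = d i (f i) → f i ≤ k) {x : V} (hx : x ∈ periodicPts f) :
    f (f x) = x := by
  obtain ⟨n, hn, hxn⟩ := mem_periodicPts.mp hx
  obtain ⟨m, hm, hm_min⟩ :=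
    (Finset.range n).exists_min_image (fun m => f^[m] x) ⟨0, Finset.mem_range.mpr hn⟩
  set p := f^[m] x
  have hp_le : ∀ l, p ≤ f^[l] x := fun l => by
    rw [← hxn.iterate_mod_apply]
    exact hm_min _ (Finset.mem_range.mpr (Nat.mod_lt _ hn))
  have hp : f^[2] p = p := le_antisymm
    (apply_apply_le_of_mem_periodicPts hd hf hmin htie (mem_periodicPts.mpr ⟨n, hn, hxn.apply_iterate m⟩))
    (by simpa only [p, ← iterate_add_apply] using hp_le (2 + m))
  have hx_eq : f^[n - m] p = x := by
    rw [← iterate_add_apply, Nat.sub_add_cancel (Finset.mem_range.mp hm).le, hxn.eq]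
  change f^[2] x = x
  rw [← hx_eq, ← iterate_add_apply, add_comm, iterate_add_apply, hp]

end NearestNeighbour

theorem Fin.iterate_apply_eq_of_apply_eq_succ {α : Type*} {k : ℕ} [NeZero k] {f : α → α}
    {v : Fin k → α} (hcyc : ∀ j, f (v j) = v (j + 1)) (j : Fin k) (m : ℕ) :
    f^[m] (v j) = v (j + m) := by
  induction m with
  | zero => simp
  | succ m ih => rw [iterate_succ_apply', ih, hcyc, Nat.cast_succ, add_assoc]

/-- Every directed cycle in a Best Friend Graph has length exactly two. -/
theorem best_friend_cycle_length_two
    {V : Type*} [LinearOrder V]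
    (d : V → V → ℝ) (f : V → V)
    (hd : ∀ i j, d i j = d j i)
    (hf : ∀ i, f i ≠ i)
    (hmin : ∀ i k, k ≠ i → d i (f i) ≤ d i k)
    (htie : ∀ i k, k ≠ i → d i k = d i (f i) → f i ≤ k) :
    ∀ (k : ℕ) (hk : 2 ≤ k) (v : Fin k → V), Function.Injective v →
      (∀ j : Fin k, f (v j) = v (j + ⟨1, by omega⟩)) → k = 2 := by
  intro k hk v hinj hcyc
  obtain ⟨n, rfl⟩ := Nat.exists_eq_add_of_le' hk
  simp only [Fin.mk_one] at hcyc
  have horbit := Fin.iterate_apply_eq_of_apply_eq_succ hcyc 0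
  have hperiodic : v 0 ∈ periodicPts f :=
    mem_periodicPts.mpr ⟨n + 2, by omega, by simpa [IsPeriodicPt, IsFixedPt] using horbit (n + 2)⟩
  have htwo : ((2 : ℕ) : Fin (n + 2)) = 0 := by
    apply hinj
    rw [← zero_add ((2 : ℕ) : Fin (n + 2)), ← horbit]
    exact apply_apply_eq_of_mem_periodicPts hd hf hmin htie hperiodic
  have := Nat.le_of_dvd two_pos (Fin.natCast_eq_zero.mp htwo)
  omega
end

section
/- If nearest neighbors are unique (for each i and each k ∉ {i, f(i)}, d(i, f(i)) < d(i, k)), then any directed cycle in the Best Friend Graph is a mutual pair: there exist i ≠ j with f(i) = j and f(j) = i, and moreover every directed cycle consists of exactly such a pair. -/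
/-- If nearest neighbors are unique, then any directed cycle in the Best Friend Graph
is a mutual pair: there exist i ≠ j with f(i) = j and f(j) = i, and every directed
cycle consists of exactly such a pair. -/
theorem best_friend_cycle_is_mutual_pair
    {V : Type*} [Fintype V]
    (hV : 2 ≤ Fintype.card V)
    (d : V → V → ℝ) (f : V → V)
    (hd : ∀ i j, d i j = d j i)
    (hf : ∀ i, f i ≠ i)
    (hstrict : ∀ i k, k ≠ i → k ≠ f i → d i (f i) < d i k) :
    (∃ i j : V, i ≠ j ∧ f i = j ∧ f j = i) ∧
    (∀ (k : ℕ) (hk : 2 ≤ k) (v : Fin k → V), Function.Injective v →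
      (∀ j : Fin k, f (v j) = v (j + ⟨1, by omega⟩)) →
      k = 2 ∧ ∀ j : Fin k, f (f (v j)) = v j) := by
  have hne : Nonempty V := Fintype.card_pos_iff.mp (by omega)
  constructor
  · obtain ⟨i, hi⟩ := Finite.exists_min (fun i => d i (f i))
    refine ⟨i, f i, fun h => hf i h.symm, rfl, ?_⟩
    by_contra h
    have h1 : d (f i) (f (f i)) < d (f i) i :=
      hstrict (f i) i (fun e => hf i e.symm) (fun e => h e.symm)
    have h2 := hi (f i)
    rw [hd (f i) i] at h1
    linarith
  · intro k hk v hinj hcyc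
    haveI : NeZero k := ⟨by omega⟩
    set one : Fin k := ⟨1, by omega⟩ with hone
    have hone_ne : one ≠ 0 := by
      simp [hone, Fin.ext_iff, Nat.mod_eq_of_lt (by omega : 1 < k)]
    have hk2 : k = 2 := by
      by_contra hk3
      have hk3' : 3 ≤ k := by omega
      have htwo : one + one ≠ 0 := by
        simp [hone, Fin.ext_iff, Fin.val_add, Nat.mod_eq_of_lt (by omega : 1 < k),
          Nat.mod_eq_of_lt (by omega : 2 < k)]
      obtain ⟨j₀, hj₀⟩ := Finite.exists_min (fun j : Fin k => d (v j) (f (v j)))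
      have hne2 : v j₀ ≠ f (v (j₀ + one)) := by
        rw [hcyc (j₀ + one)]
        intro h
        have := hinj h
        rw [add_assoc] at this
        exact htwo (by simpa using (add_eq_left.mp this.symm))
      have hne1 : v j₀ ≠ v (j₀ + one) := by
        intro h
        exact hone_ne (by simpa using (add_eq_left.mp (hinj h).symm))
      have h1 : d (v (j₀ + one)) (f (v (j₀ + one))) < d (v (j₀ + one)) (v j₀) :=
        hstrict _ _ hne1 hne2
      have h2 := hj₀ (j₀ + one)
      have h3 : d (v (j₀ + one)) (v j₀) = d (v j₀) (f (v j₀)) := by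
        rw [hd, hcyc j₀]
      linarith
    subst hk2
    refine ⟨rfl, fun j => ?_⟩
    rw [hcyc j, hcyc (j + one)]
    congr 1
    rw [add_assoc]
    have : one + one = 0 := by
      apply Fin.ext
      simp [hone, Fin.val_add]
    rw [this, add_zero]
end
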